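/- arXiv:1008.1498 — 2 statements merged into one kernel-verified Lean document; each statement's English description precedes it below -/
import Mathlib

section
/- Let A be an m×n matrix over ℚ with m ≥ n such that every square submatrix of A is nonsingular (for every k ≥ 1 and every row set R and column set C with |R| = |C| = k, the submatrix A(R,C) is invertible). Let B be the (m+n)×n matrix obtained by stacking the n×n identity matrix Iₙ on top of A. Then B is optimally sparse: for every invertible n×n matrix X over ℚ, nnz(BX) ≥ nnz(B) = n(m+1). -/
/-!
If `x ≠ 0` is a column of `X` with support `S` and `A *ᵥ x` vanished on `#S` rows, the
`#S × #S` submatrix of `A` on those rows and the columns `S` would annihilate the nonzero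
vector `x` restricted to `S`. Hence `A *ᵥ x` has fewer than `#S` zeros, and the column
`(x, A *ᵥ x)` of `B * X` has at least `#S + (m - #S + 1) = m + 1` nonzero entries.
-/

/-- Number of nonzero entries of a matrix. -/
def nnz {μ ν : Type*} [Fintype μ] [Fintype ν] [DecidableEq ℚ]
    (A : Matrix μ ν ℚ) : ℕ :=
  Finset.card (Finset.univ.filter fun p : μ × ν => A p.1 p.2 ≠ 0)

open Finset Function Matrix

namespace Matrix

variable {K : Type*} [Field K] {μ ν : Type*}

def SquareSubmatricesNonsingular (A : Matrix μ ν K) : Prop :=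
  ∀ k : ℕ, 1 ≤ k → ∀ (r : Fin k → μ) (c : Fin k → ν),
    Injective r → Injective c → IsUnit (A.submatrix r c).det

theorem SquareSubmatricesNonsingular.apply_ne_zero {A : Matrix μ ν K}
    (hA : A.SquareSubmatricesNonsingular) (i : μ) (j : ν) : A i j ≠ 0 := by
  have h := hA 1 le_rfl (fun _ => i) (fun _ => j)
    (injective_of_subsingleton _) (injective_of_subsingleton _)
  simpa using h.ne_zero

variable [Fintype ν]

theorem eq_zero_of_mulVec_apply_eq_zero {A : Matrix μ ν K} {k : ℕ} {r : Fin k → μ}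
    {c : Fin k → ν} (hc : Injective c) (hA : IsUnit (A.submatrix r c).det) {x : ν → K}
    (hx : ∀ j ∉ Set.range c, x j = 0) (hAx : ∀ l, (A *ᵥ x) (r l) = 0) : x = 0 := by
  have hsub : A.submatrix r c *ᵥ (x ∘ c) = 0 := by
    ext l
    rw [Pi.zero_apply, ← hAx l]
    exact Fintype.sum_of_injective c hc _ _ (fun j hj => by simp [hx j hj]) fun _ => rfl
  have hxc : x ∘ c = 0 :=
    (mulVec_injective_iff_isUnit.mpr ((isUnit_iff_isUnit_det _).mpr hA)) (by simpa using hsub)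
  ext j
  by_cases hj : j ∈ Set.range c
  · obtain ⟨l, rfl⟩ := hj
    exact congrFun hxc l
  · exact hx j hj

variable [Fintype μ] [DecidableEq K]

theorem SquareSubmatricesNonsingular.card_zeros_mulVec_lt {A : Matrix μ ν K}
    (hA : A.SquareSubmatricesNonsingular) {x : ν → K} (hx : x ≠ 0) :
    #{i | (A *ᵥ x) i = 0} < #{j | x j ≠ 0} := by
  set S : Finset ν := {j | x j ≠ 0}
  set Z : Finset μ := {i | (A *ᵥ x) i = 0}
  by_contra! hSZ
  have hS : 1 ≤ #S := card_pos.mpr (by simpa [S, Finset.Nonempty, funext_iff] using hx)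
  let c : Fin #S ↪ ν := S.equivFin.symm.toEmbedding.trans (.subtype _)
  let r : Fin #S ↪ μ :=
    (Fin.castLEEmb hSZ).trans (Z.equivFin.symm.toEmbedding.trans (.subtype _))
  have hx0 : x = 0 := by
    refine eq_zero_of_mulVec_apply_eq_zero c.injective
      (hA _ hS r c r.injective c.injective) (fun j hj => ?_) fun l => ?_
    · by_contra hxj
      exact hj ⟨S.equivFin ⟨j, by simpa [S] using hxj⟩, by simp [c]⟩
    · have h := (Z.equivFin.symm (Fin.castLE hSZ l)).2
      simp only [Z, mem_filter] at h
      exact h.2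
  exact hx hx0

theorem SquareSubmatricesNonsingular.card_lt_card_support_add_card_support_mulVec
    {A : Matrix μ ν K} (hA : A.SquareSubmatricesNonsingular) {x : ν → K} (hx : x ≠ 0) :
    Fintype.card μ < #{j | x j ≠ 0} + #{i | (A *ᵥ x) i ≠ 0} := by
  have hcompl := card_filter_add_card_filter_not (s := univ) fun i => (A *ᵥ x) i = 0
  rw [card_univ] at hcompl
  have := hA.card_zeros_mulVec_lt hx
  simp only [ne_eq] at this ⊢
  omega

end Matrix

section nnz

variable {μ μ' ν : Type*} [Fintype μ] [Fintype μ'] [Fintype ν]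

theorem nnz_eq_sum_card_col (M : Matrix μ ν ℚ) : nnz M = ∑ j, #{i | M i j ≠ 0} := by
  rw [nnz, card_filter, Fintype.sum_prod_type, sum_comm]
  simp only [card_filter]

theorem nnz_fromRows (M : Matrix μ ν ℚ) (N : Matrix μ' ν ℚ) :
    nnz (fromRows M N) = nnz M + nnz N := by
  simp only [nnz_eq_sum_card_col, card_filter, Fintype.sum_sum_type, fromRows_apply_inl,
    fromRows_apply_inr, sum_add_distrib]
  -- only the `Decidable` instances still differ; they agree after unfolding `fromRows`
  rfl

theorem nnz_one [DecidableEq ν] : nnz (1 : Matrix ν ν ℚ) = Fintype.card ν := by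
  simp [nnz_eq_sum_card_col, one_apply, filter_eq']

theorem nnz_of_forall_ne_zero {M : Matrix μ ν ℚ} (hM : ∀ i j, M i j ≠ 0) :
    nnz M = Fintype.card μ * Fintype.card ν := by
  simp [nnz, hM]

theorem Matrix.SquareSubmatricesNonsingular.card_mul_le_nnz_add_nnz_mul {A : Matrix μ ν ℚ}
    (hA : A.SquareSubmatricesNonsingular) {X : Matrix ν ν ℚ} (hX : ∀ j, Xᵀ j ≠ 0) :
    Fintype.card ν * (Fintype.card μ + 1) ≤ nnz X + nnz (A * X) := by
  rw [nnz_eq_sum_card_col, nnz_eq_sum_card_col, ← sum_add_distrib]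
  calc Fintype.card ν * (Fintype.card μ + 1) = ∑ _j : ν, (Fintype.card μ + 1) := by
        simp
    _ ≤ _ := sum_le_sum fun j _ => ?_
  exact hA.card_lt_card_support_add_card_support_mulVec (hX j)

end nnz

theorem stacked_identity_optimally_sparse_general (m n : ℕ)
    (A : Matrix (Fin m) (Fin n) ℚ)
    (hsub : ∀ k : ℕ, 1 ≤ k → ∀ (r : Fin k → Fin m) (c : Fin k → Fin n),
      Function.Injective r → Function.Injective c →
      IsUnit (A.submatrix r c).det)
    (B : Matrix (Fin n ⊕ Fin m) (Fin n) ℚ)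
    (hB : B = Matrix.fromRows (1 : Matrix (Fin n) (Fin n) ℚ) A) :
    nnz B = n * (m + 1) ∧
      ∀ X : Matrix (Fin n) (Fin n) ℚ, IsUnit X.det → nnz B ≤ nnz (B * X) := by
  have hA : A.SquareSubmatricesNonsingular := hsub
  have hnnzB : nnz B = n * (m + 1) := by
    rw [hB, nnz_fromRows, nnz_one, nnz_of_forall_ne_zero hA.apply_ne_zero]
    simp only [Fintype.card_fin]
    ring
  refine ⟨hnnzB, fun X hX => ?_⟩
  have hcol : ∀ j, Xᵀ j ≠ 0 := fun j h0 =>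
    hX.ne_zero (det_eq_zero_of_column_eq_zero j fun i => congrFun h0 i)
  rw [hnnzB, hB, fromRows_mul, one_mul, nnz_fromRows]
  simpa using hA.card_mul_le_nnz_add_nnz_mul hcol

/-- If every square submatrix of the m×n rational matrix `A` (with m ≥ n) is
nonsingular, then the matrix `B` obtained by stacking the n×n identity matrix
on top of `A` is optimally sparse: `nnz (B * X) ≥ nnz B = n * (m + 1)`
for every invertible `X`. -/
theorem stacked_identity_optimally_sparse (m n : ℕ) (hmn : n ≤ m)
    (A : Matrix (Fin m) (Fin n) ℚ)
    (hsub : ∀ k : ℕ, 1 ≤ k → ∀ (r : Fin k → Fin m) (c : Fin k → Fin n),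
      Function.Injective r → Function.Injective c →
      IsUnit (A.submatrix r c).det)
    (B : Matrix (Fin n ⊕ Fin m) (Fin n) ℚ)
    (hB : B = Matrix.fromRows (1 : Matrix (Fin n) (Fin n) ℚ) A) :
    nnz B = n * (m + 1) ∧
      ∀ X : Matrix (Fin n) (Fin n) ℚ, IsUnit X.det → nnz B ≤ nnz (B * X) :=
  stacked_identity_optimally_sparse_general m n A hsub B hB
end

section
/- Let A be a full-rank m×n matrix over ℚ (its n columns a₁,…,aₙ are linearly independent), written A = (C | B) where B consists of a contiguous set of right-most columns of A and C is nonempty. For j ∈ {1,…,n}, let A∖j denote A with its j-th column removed. Then the set {v ∈ col(A) : v ∉ col(B)} is nonempty, and min{ ||v||₀ : v ∈ col(A), v ∉ col(B) } = min over all indices j with a_j ∉ col(B) of ( min over x ∈ ℚ^{n−1} of ||a_j − (A∖j)x||₀ ). -/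
/-! Any `v = A w` in `col A ∖ col B` has a coefficient `w j ≠ 0` with `a_j ∉ col B` (otherwise
`v ∈ col B`); dividing by `w j` puts `v` in the form `a_j - (A∖j) x` without changing `‖·‖₀`.
Conversely `a_j - (A∖j) x` lies in `col A`, and if it lay in `col B` then `a_j` would lie in the
span of the other columns, against the independence of the columns. So both minima are taken over
the same set of values. -/

/-- Number of nonzero entries of a vector (the ℓ₀ quasi-norm). -/
def l0 {m : ℕ} (x : Fin m → ℚ) : ℕ :=
  Finset.card (Finset.univ.filter fun i => x i ≠ 0)

theorem l0_smul {m : ℕ} {c : ℚ} (hc : c ≠ 0) (v : Fin m → ℚ) : l0 (c • v) = l0 v := by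
  simp only [l0, Pi.smul_apply, smul_eq_mul, ne_eq, mul_eq_zero, hc, false_or]

namespace Matrix

open Submodule

section CommSemiring

variable {R m ι κ : Type*} [CommSemiring R] (A : Matrix m ι R)

theorem range_mulVec_eq_span_col [Fintype ι] : Set.range A.mulVec = span R (Set.range A.col) := by
  rw [← range_mulVecLin, LinearMap.coe_range, coe_mulVecLin]

theorem range_submatrix_mulVec [Fintype κ] (f : κ → ι) :
    Set.range (A.submatrix id f).mulVec = span R (A.col '' Set.range f) := by
  rw [range_mulVec_eq_span_col, ← Set.range_comp]
  rfl

theorem mulVec_eq_smul_col_add_submatrix_mulVec [Fintype ι] [DecidableEq ι] (w : ι → R) (j : ι) :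
    A *ᵥ w = w j • A.col j + A.submatrix id (Subtype.val : {j' // j' ≠ j} → ι) *ᵥ (w ·) := by
  ext i
  simp only [mulVec, dotProduct, Fintype.sum_eq_add_sum_subtype_ne _ j, Pi.add_apply,
    Pi.smul_apply, smul_eq_mul, col_apply, submatrix_apply, id, mul_comm]

end CommSemiring

variable {K m ι : Type*} [Field K] [Fintype ι] (A : Matrix m ι K)

theorem linearIndependent_col_of_rank_eq_card (hA : A.rank = Fintype.card ι) :
    LinearIndependent K A.col :=
  linearIndependent_iff_card_eq_finrank_span.2 (by rw [← hA, rank_eq_finrank_span_cols]; rfl)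

variable [DecidableEq ι]

theorem col_sub_submatrix_mulVec_mem_range (j : ι) (x : {j' // j' ≠ j} → K) :
    A.col j - A.submatrix id Subtype.val *ᵥ x ∈ Set.range A.mulVec := by
  rw [range_mulVec_eq_span_col]
  refine sub_mem (subset_span (Set.mem_range_self j)) ?_
  have hsub : Set.range (A.submatrix id (Subtype.val : {j' // j' ≠ j} → ι)).mulVec ⊆
      span K (Set.range A.col) := by
    rw [range_submatrix_mulVec]
    exact span_mono (Set.image_subset_range _ _)
  exact hsub (Set.mem_range_self x)

theorem exists_col_sub_submatrix_mulVec_eq_smul {W : Submodule K (m → K)} {v : m → K}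
    (hv : v ∈ Set.range A.mulVec) (hvW : v ∉ W) :
    ∃ j, A.col j ∉ W ∧ ∃ x : {j' // j' ≠ j} → K, ∃ c : K, c ≠ 0 ∧
      A.col j - A.submatrix id Subtype.val *ᵥ x = c • v := by
  obtain ⟨w, rfl⟩ := hv
  obtain ⟨j, hwj, hj⟩ : ∃ j, w j ≠ 0 ∧ A.col j ∉ W := by
    by_contra! h
    refine hvW ?_
    rw [mulVec_eq_sum]
    refine W.sum_mem fun j _ => ?_
    rcases eq_or_ne (w j) 0 with hw | hw
    · simp [hw]
    · exact W.smul_of_tower_mem _ (h j hw)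
  refine ⟨j, hj, fun j' => -((w j)⁻¹ * w j'), (w j)⁻¹, inv_ne_zero hwj, ?_⟩
  rw [mulVec_eq_smul_col_add_submatrix_mulVec A w j, smul_add, smul_smul, inv_mul_cancel₀ hwj,
    one_smul, sub_eq_add_neg, ← mulVec_neg, ← mulVec_smul]
  congr 2
  ext j'
  simp

theorem col_sub_submatrix_mulVec_notMem_span (hA : LinearIndependent K A.col) {S : Set ι} {j : ι}
    (hj : A.col j ∉ span K (A.col '' S)) (x : {j' // j' ≠ j} → K) :
    A.col j - A.submatrix id Subtype.val *ᵥ x ∉ span K (A.col '' S) := by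
  have hjS : S ⊆ {j}ᶜ := fun j' hj' hjj' => hj (subset_span ⟨j', hj', congrArg A.col hjj'⟩)
  have hx : A.submatrix id Subtype.val *ᵥ x ∈ span K (A.col '' {j}ᶜ) := by
    have := range_submatrix_mulVec A (Subtype.val : {j' // j' ≠ j} → ι)
    rw [Subtype.range_coe_subtype] at this
    exact this.subset (Set.mem_range_self x)
  intro hmem
  refine hA.notMem_span_image (s := {j}ᶜ) (fun h => h rfl) ?_
  simpa using add_mem (span_mono (Set.image_mono hjS) hmem) hx

end Matrix

open Matrix in
/-- Let `A` be a full-rank m×(k+b) matrix written `A = (C | B)` where `B`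
consists of the `b` right-most columns and `C` is nonempty (`k ≥ 1`). Then
the set of vectors in `col A` but not in `col B` is nonempty, and the
sparsest such vector is obtained as the sparsest vector of the form
`a_j - (A∖j) x` over all columns `a_j ∉ col B`, where `A∖j` is `A` with its
`j`-th column removed. -/
theorem sparsest_independent_vector_via_min_unsatisfy (m k b : ℕ) (hk : 1 ≤ k)
    (A : Matrix (Fin m) (Fin (k + b)) ℚ) (hrank : A.rank = k + b) :
    ({v : Fin m → ℚ | v ∈ Set.range A.mulVec ∧
        v ∉ Set.range (A.submatrix id (Fin.natAdd k)).mulVec}.Nonempty) ∧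
      sInf {t : ℕ | ∃ v : Fin m → ℚ, v ∈ Set.range A.mulVec ∧
          v ∉ Set.range (A.submatrix id (Fin.natAdd k)).mulVec ∧ l0 v = t} =
        sInf {t : ℕ | ∃ j : Fin (k + b),
          (fun i => A i j) ∉ Set.range (A.submatrix id (Fin.natAdd k)).mulVec ∧
          ∃ x : {j' : Fin (k + b) // j' ≠ j} → ℚ,
            l0 ((fun i => A i j) -
              (A.submatrix id (Subtype.val : {j' : Fin (k + b) // j' ≠ j} → Fin (k + b))).mulVec x) = t} := by
  have hA : LinearIndependent ℚ A.col :=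
    linearIndependent_col_of_rank_eq_card A (by rw [hrank, Fintype.card_fin])
  rw [range_submatrix_mulVec]
  refine ⟨⟨A.col ⟨0, by omega⟩, ⟨Pi.single _ 1, mulVec_single_one A _⟩, ?_⟩,
    congrArg sInf (Set.ext fun t => ⟨?_, ?_⟩)⟩
  · exact hA.notMem_span_image fun ⟨j, hj⟩ => by simp [Fin.ext_iff] at hj; omega
  · rintro ⟨v, hv, hvB, rfl⟩
    obtain ⟨j, hj, x, c, hc, hx⟩ := exists_col_sub_submatrix_mulVec_eq_smul A hv hvB
    exact ⟨j, hj, x, by rw [← l0_smul hc v, ← hx]; rfl⟩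
  · rintro ⟨j, hj, x, rfl⟩
    exact ⟨_, col_sub_submatrix_mulVec_mem_range A j x,
      col_sub_submatrix_mulVec_notMem_span A hA hj x, rfl⟩
end
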